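/- At most one of a mutually added pair of edges is useful: let (V, W, b) be an influence network, v₁ ≠ v₂ nodes with W(v₁,v₂) = W(v₂,v₁) = 0, and let W' agree with W everywhere except W'(v₁,v₂) = w₁ > 0 and W'(v₂,v₁) = w₂ > 0. If a seed set S ⊆ V achieves full influenceability in (V, W', b), then S ∪ {v₁} or S ∪ {v₂} achieves full influenceability in (V, W, b). -/

import Mathlib

/-!
Influence barricade model: a finite vertex set `V : Finset ι`, edge weights
`W : ι → ι → ℝ` (an edge `u → v` exists iff `W u v > 0`), and barricade
factors `b : ι → ℝ`.  For a seed set `S ⊆ V`, the diffusion process is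
`A 0 = S` and `A (t+1) = A t ∪ {u ∈ V : ∑ v ∈ A t, W v u ≥ b u}`.
-/

open Finset

open Classical in
/-- One step of the diffusion process under the influence barricade model. -/
noncomputable def diffStep {ι : Type*} [DecidableEq ι] (V : Finset ι)
    (W : ι → ι → ℝ) (b : ι → ℝ) (A : Finset ι) : Finset ι :=
  A ∪ V.filter (fun u => b u ≤ ∑ v ∈ A, W v u)

/-- `activeSet V W b S t` is the set `A_t(S)` of nodes active at time `t`. -/
noncomputable def activeSet {ι : Type*} [DecidableEq ι] (V : Finset ι)
    (W : ι → ι → ℝ) (b : ι → ℝ) (S : Finset ι) : ℕ → Finset ι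
  | 0 => S
  | t + 1 => diffStep V W b (activeSet V W b S t)

/-- The final active set `A(S) = A_{|V|}(S)`. -/
noncomputable def finalActive {ι : Type*} [DecidableEq ι] (V : Finset ι)
    (W : ι → ι → ℝ) (b : ι → ℝ) (S : Finset ι) : Finset ι :=
  activeSet V W b S V.card

/-- `S` achieves full influenceability: every node is eventually active. -/
def FullInf {ι : Type*} [DecidableEq ι] (V : Finset ι) (W : ι → ι → ℝ)
    (b : ι → ℝ) (S : Finset ι) : Prop :=
  finalActive V W b S = V

/-- `σ(S)`: the number of nodes active at the end of the influence process. -/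
noncomputable def sigmaInf {ι : Type*} [DecidableEq ι] (V : Finset ι)
    (W : ι → ι → ℝ) (b : ι → ℝ) (S : Finset ι) : ℕ :=
  (finalActive V W b S).card

/-- The minimum seed number: the least cardinality of a seed set achieving
full influenceability. -/
noncomputable def minSeed {ι : Type*} [DecidableEq ι] (V : Finset ι)
    (W : ι → ι → ℝ) (b : ι → ℝ) : ℕ :=
  sInf {n | ∃ S : Finset ι, S ⊆ V ∧ S.card = n ∧ FullInf V W b S}

/-!
Let `x` be whichever of `v₁, v₂` becomes active first under `W'` and `y` the other one.
The added edge `x → y` never helps, since it only carries weight once `y` is already active,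
and the added edge `y → x` only helps `x`, which seeding `x` makes active from the start.
So the `W'`-process from `S` is dominated at every step by the `W`-process from `S ∪ {x}`.
-/

section Diffusion

variable {ι : Type*} [DecidableEq ι] {V : Finset ι} {W W' : ι → ι → ℝ} {b : ι → ℝ}
  {S T A : Finset ι} {u : ι}

lemma mem_diffStep :
    u ∈ diffStep V W b A ↔ u ∈ A ∨ (u ∈ V ∧ b u ≤ ∑ v ∈ A, W v u) := by
  rw [diffStep, mem_union, mem_filter]

variable (V W b S)

lemma subset_activeSet (t : ℕ) : S ⊆ activeSet V W b S t := by
  induction t with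
  | zero => exact subset_rfl
  | succ t ih => exact ih.trans subset_union_left

lemma activeSet_monotone : Monotone (activeSet V W b S) :=
  monotone_nat_of_le_succ fun _ => subset_union_left

variable {V W b S}

lemma activeSet_subset (hS : S ⊆ V) (t : ℕ) : activeSet V W b S t ⊆ V := by
  induction t with
  | zero => exact hS
  | succ t ih => exact union_subset ih (filter_subset _ _)

lemma activeSet_subset_activeSet_of_sum_le (hW : ∀ u v, 0 ≤ W u v) (hST : S ⊆ T)
    (hsum : ∀ t u, u ∉ T → u ∉ activeSet V W' b S t →
      ∑ v ∈ activeSet V W' b S t, W' v u ≤ ∑ v ∈ activeSet V W' b S t, W v u)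
    (t : ℕ) : activeSet V W' b S t ⊆ activeSet V W b T t := by
  induction t with
  | zero => exact hST
  | succ t ih =>
    intro u hu
    have hstep : activeSet V W b T t ⊆ activeSet V W b T (t + 1) :=
      activeSet_monotone V W b T t.le_succ
    rcases mem_diffStep.1 hu with hu | ⟨huV, hbu⟩
    · exact hstep (ih hu)
    by_cases huT : u ∈ T
    · exact subset_activeSet V W b T _ huT
    by_cases huA : u ∈ activeSet V W' b S t
    · exact hstep (ih huA)
    refine mem_diffStep.2 (Or.inr ⟨huV, ?_⟩)
    calc b u ≤ ∑ v ∈ activeSet V W' b S t, W' v u := hbu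
      _ ≤ ∑ v ∈ activeSet V W' b S t, W v u := hsum t u huT huA
      _ ≤ ∑ v ∈ activeSet V W b T t, W v u :=
        sum_le_sum_of_subset_of_nonneg ih fun v _ _ => hW v u

lemma activeSet_subset_activeSet_union_singleton {x y : ι} (hW : ∀ u v, 0 ≤ W u v)
    (hagree : ∀ a c : ι, ¬(a = x ∧ c = y) → ¬(a = y ∧ c = x) → W' a c = W a c)
    (hxy : ∀ t, x ∈ activeSet V W' b S t → y ∈ activeSet V W' b S t) (t : ℕ) :
    activeSet V W' b S t ⊆ activeSet V W b (S ∪ {x}) t := by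
  refine activeSet_subset_activeSet_of_sum_le hW subset_union_left (fun t u hux huA => ?_) t
  have hux : u ≠ x := fun h => hux (mem_union_right S (mem_singleton.2 h))
  refine (sum_congr rfl fun v hv => hagree v u ?_ fun h => hux h.2).le
  rintro ⟨rfl, rfl⟩
  exact huA (hxy t hv)

lemma fullInf_of_finalActive_subset (hT : T ⊆ V) (hfull : FullInf V W' b S)
    (hsub : finalActive V W' b S ⊆ finalActive V W b T) : FullInf V W b T :=
  (activeSet_subset hT V.card).antisymm (hfull.ge.trans hsub)

lemma fullInf_union_singleton {x y : ι} (hW : ∀ u v, 0 ≤ W u v) (hx : x ∈ V) (hS : S ⊆ V)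
    (hagree : ∀ a c : ι, ¬(a = x ∧ c = y) → ¬(a = y ∧ c = x) → W' a c = W a c)
    (hxy : ∀ t, x ∈ activeSet V W' b S t → y ∈ activeSet V W' b S t)
    (hfull : FullInf V W' b S) : FullInf V W b (S ∪ {x}) :=
  fullInf_of_finalActive_subset (union_subset hS (singleton_subset_iff.2 hx)) hfull
    (activeSet_subset_activeSet_union_singleton hW hagree hxy V.card)

end Diffusion

lemma Monotone.forall_mem_imp_or_forall_mem_imp {α β : Type*} [LinearOrder β]
    {A : β → Finset α} (hA : Monotone A) (x y : α) :
    (∀ t, x ∈ A t → y ∈ A t) ∨ (∀ t, y ∈ A t → x ∈ A t) := by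
  by_contra! ⟨⟨s, hxs, hys⟩, ⟨t, hyt, hxt⟩⟩
  rcases le_total s t with hst | hts
  · exact hxt (hA hst hxs)
  · exact hys (hA hts hyt)

theorem at_most_one_added_edge_useful_general {ι : Type*} [DecidableEq ι]
    (V : Finset ι) (W W' : ι → ι → ℝ) (b : ι → ℝ)
    (hW : ∀ u v, 0 ≤ W u v)
    (v₁ v₂ : ι) (hv₁ : v₁ ∈ V) (hv₂ : v₂ ∈ V)
    (hagree : ∀ a c : ι, ¬(a = v₁ ∧ c = v₂) → ¬(a = v₂ ∧ c = v₁) →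
      W' a c = W a c)
    (S : Finset ι) (hS : S ⊆ V) (hfull : FullInf V W' b S) :
    FullInf V W b (S ∪ {v₁}) ∨ FullInf V W b (S ∪ {v₂}) := by
  rcases (activeSet_monotone V W' b S).forall_mem_imp_or_forall_mem_imp v₁ v₂ with h | h
  · exact Or.inl (fullInf_union_singleton hW hv₁ hS hagree h hfull)
  · exact Or.inr (fullInf_union_singleton hW hv₂ hS (fun a c h₁ h₂ => hagree a c h₂ h₁) h hfull)

/-- at most one of a mutually added pair of edges is useful:
if `S` achieves full influenceability after adding the edges `v₁ → v₂` and
`v₂ → v₁`, then `S ∪ {v₁}` or `S ∪ {v₂}` achieves full influenceability in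
the original network. -/
theorem at_most_one_added_edge_useful {ι : Type*} [DecidableEq ι]
    (V : Finset ι) (W W' : ι → ι → ℝ) (b : ι → ℝ)
    (hW : ∀ u v, 0 ≤ W u v) (hb : ∀ u, 0 ≤ b u)
    (v₁ v₂ : ι) (hv₁ : v₁ ∈ V) (hv₂ : v₂ ∈ V) (hne : v₁ ≠ v₂)
    (h₁ : W v₁ v₂ = 0) (h₂ : W v₂ v₁ = 0)
    (w₁ w₂ : ℝ) (hw₁ : 0 < w₁) (hw₂ : 0 < w₂)
    (hW'₁ : W' v₁ v₂ = w₁) (hW'₂ : W' v₂ v₁ = w₂)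
    (hagree : ∀ a c : ι, ¬(a = v₁ ∧ c = v₂) → ¬(a = v₂ ∧ c = v₁) →
      W' a c = W a c)
    (S : Finset ι) (hS : S ⊆ V) (hfull : FullInf V W' b S) :
    FullInf V W b (S ∪ {v₁}) ∨ FullInf V W b (S ∪ {v₂}) :=
  at_most_one_added_edge_useful_general V W W' b hW v₁ v₂ hv₁ hv₂ hagree S hS hfull
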